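/- arXiv:2304.04445 — 7 statements merged into one kernel-verified Lean document; each statement's English description precedes it below -/
import Mathlib

section
/- Let G = (V, E, w) be an undirected weighted graph with metric d = d_G, let A_i ⊇ A_{i+1} be subsets of V, and for v ∈ A_i define the pivot p_{i+1}(v) as a closest vertex of A_{i+1} to v, the bunch B_i(v) = {u ∈ A_i : d(v,u) < d(v, p_{i+1}(v))}, and the half-bunch B_i^{1/2}(v) = {u ∈ A_i : d(v,u) < (1/2)·d(v, p_{i+1}(v))}. Suppose u, v, y, z ∈ A_i with v ∈ B_i^{1/2}(u) and z ∈ B_i^{1/2}(y), and suppose x ∈ V lies on a shortest u–v path and on a shortest y–z path. If d(u,v) ≤ d(y,z), then u, v, z ∈ B_i(y). -/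
/-- **Branching events of half-bunch pairs lie in full bunches.**
In the shortest-path metric of an undirected weighted graph (modeled as a
metric space), with `Ai ⊇ Ai1` and pivot `p v` a closest `Ai1`-vertex to `v`:
if `u, v, y, z ∈ Ai` with `v` in the half-bunch of `u` (i.e.
`dist u v < (1/2)·dist u (p u)`), `z` in the half-bunch of `y`, `x` lies on a
shortest `u–v` path and on a shortest `y–z` path, and `dist u v ≤ dist y z`,
then `u, v, z` all belong to the bunch `B_i(y) = {w ∈ Ai : dist y w < dist y (p y)}`. -/
theorem halfBunch_branching_in_bunch {V : Type*} [MetricSpace V]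
    (Ai Ai1 : Set V) (hsub : Ai1 ⊆ Ai)
    (p : V → V) (hp_mem : ∀ v, p v ∈ Ai1)
    (hp_min : ∀ v, ∀ a ∈ Ai1, dist v (p v) ≤ dist v a)
    (u v y z x : V)
    (hu : u ∈ Ai) (hv : v ∈ Ai) (hy : y ∈ Ai) (hz : z ∈ Ai)
    (hhalf_uv : dist u v < (1 / 2) * dist u (p u))
    (hhalf_yz : dist y z < (1 / 2) * dist y (p y))
    (hx_uv : dist u x + dist x v = dist u v)
    (hx_yz : dist y x + dist x z = dist y z)
    (hle : dist u v ≤ dist y z) :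
    u ∈ {w | w ∈ Ai ∧ dist y w < dist y (p y)}
    ∧ v ∈ {w | w ∈ Ai ∧ dist y w < dist y (p y)}
    ∧ z ∈ {w | w ∈ Ai ∧ dist y w < dist y (p y)} := by
  have hxz : (0:ℝ) ≤ dist x z := dist_nonneg
  have hux : (0:ℝ) ≤ dist u x := dist_nonneg
  have hxv : (0:ℝ) ≤ dist x v := dist_nonneg
  have hyz : (0:ℝ) ≤ dist y z := dist_nonneg
  have tyu : dist y u ≤ dist y x + dist x u := dist_triangle y x u
  have tyv : dist y v ≤ dist y x + dist x v := dist_triangle y x v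
  have hxu : dist x u = dist u x := dist_comm x u
  refine ⟨⟨hu, ?_⟩, ⟨hv, ?_⟩, ⟨hz, ?_⟩⟩ <;> linarith
end

section
/- Let G be an undirected weighted graph with metric d, let A_i ⊇ A_{i+1} ⊆ V, with pivots p_{i+1}(·) and half-bunches B_i^{1/2}(·) as usual. Fix vertices x, y and suppose there exists a vertex a on some shortest x–y path with d(a, p_i(a)) ≤ r·d(x,y) for some r ≥ 0, where p_i(a) ∈ A_i is a closest A_i-vertex to a. If p_i(x) ∉ B_i^{1/2}(p_i(y)) and p_i(y) ∉ B_i^{1/2}(p_i(x)) (i.e., d(p_i(x), p_{i+1}(p_i(x))) ≤ 2·d(p_i(x), p_i(y))), then d(x, p_{i+1}(x)) ≤ (5 + 5r)·d(x,y), where p_{i+1}(x) is a closest A_{i+1}-vertex to x. -/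
/-- **Pivot-distance growth when half-bunch condition fails.**
In the shortest-path metric of an undirected weighted graph, `pi v` is a
closest `Ai`-vertex to `v` and `pj v` is a closest `Ai1`-vertex to `v`
(`Ai1 = A_{i+1} ⊆ Ai`).  Suppose `a` lies on a shortest `x–y` path with
`dist a (pi a) ≤ r·dist x y` for some `r ≥ 0`, and the half-bunch condition
fails, i.e. `dist (pi x) (pj (pi x)) ≤ 2·dist (pi x) (pi y)`.  Then
`dist x (pj x) ≤ (5 + 5r)·dist x y`. -/
theorem pivot_distance_bound_of_halfBunch_fail {V : Type*} [MetricSpace V]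
    (Ai Ai1 : Set V) (hsub : Ai1 ⊆ Ai)
    (pi pj : V → V)
    (hpi_mem : ∀ v, pi v ∈ Ai) (hpi_min : ∀ v, ∀ a ∈ Ai, dist v (pi v) ≤ dist v a)
    (hpj_mem : ∀ v, pj v ∈ Ai1) (hpj_min : ∀ v, ∀ a ∈ Ai1, dist v (pj v) ≤ dist v a)
    (x y a : V) (r : ℝ) (hr : 0 ≤ r)
    (ha : dist x a + dist a y = dist x y)
    (hpa : dist a (pi a) ≤ r * dist x y)
    (hhalf : dist (pi x) (pj (pi x)) ≤ 2 * dist (pi x) (pi y)) :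
    dist x (pj x) ≤ (5 + 5 * r) * dist x y := by
  have h1 : dist x (pi x) ≤ dist x a + r * dist x y := by
    calc dist x (pi x) ≤ dist x (pi a) := hpi_min x (pi a) (hpi_mem a)
      _ ≤ dist x a + dist a (pi a) := dist_triangle _ _ _
      _ ≤ dist x a + r * dist x y := by linarith
  have h2 : dist y (pi y) ≤ dist a y + r * dist x y := by
    calc dist y (pi y) ≤ dist y (pi a) := hpi_min y (pi a) (hpi_mem a)
      _ ≤ dist y a + dist a (pi a) := dist_triangle _ _ _
      _ ≤ dist a y + r * dist x y := by rw [dist_comm y a]; linarith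
  have h3 : dist (pi x) (pi y) ≤ dist (pi x) x + dist x y + dist y (pi y) := by
    calc dist (pi x) (pi y) ≤ dist (pi x) y + dist y (pi y) := dist_triangle _ _ _
      _ ≤ dist (pi x) x + dist x y + dist y (pi y) := by
          have := dist_triangle (pi x) x y; linarith
  have h4 : dist x (pj x) ≤ dist x (pi x) + dist (pi x) (pj (pi x)) := by
    calc dist x (pj x) ≤ dist x (pj (pi x)) := hpj_min x _ (hpj_mem (pi x))
      _ ≤ dist x (pi x) + dist (pi x) (pj (pi x)) := dist_triangle _ _ _
  have hc : dist (pi x) x = dist x (pi x) := dist_comm _ _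
  have n1 : 0 ≤ dist x a := dist_nonneg
  have n2 : 0 ≤ dist a y := dist_nonneg
  have n3 : 0 ≤ dist x y := dist_nonneg
  nlinarith [mul_nonneg hr n3]
end

section
/- Let d be a metric on V, let A_i ⊆ V, and for a vertex u let p_i(u) ∈ A_i denote a closest A_i-vertex to u and B_i(u) = {w ∈ A_i : d(u,w) < d(u, p_{i+1}(u))} its bunch. For vertices u, v, if p_i(u) ∉ B_i(v) and p_{i+1}(v) ∉ B_{i+1}(u), then d(u, p_{i+2}(u)) - d(u, p_i(u)) ≤ 2·d(u,v). -/
/-- The `j`-th bunch of `w`: vertices of `A j` strictly closer to `w` than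
its `(j+1)`-th pivot `p (j+1) w`. -/
def bunch {V : Type*} [MetricSpace V] (A : ℕ → Set V) (p : ℕ → V → V)
    (j : ℕ) (w : V) : Set V :=
  {x | x ∈ A j ∧ dist w x < dist w (p (j + 1) w)}

/-- **Pivot-distance increment bound.**
For a set hierarchy `V = A 0 ⊇ A 1 ⊇ …` in a metric space with pivots
`p j u` (closest `A j`-vertices) and bunches as above: if
`p i u ∉ B_i(v)` and `p (i+1) v ∉ B_{i+1}(u)`, then
`dist u (p (i+2) u) - dist u (p i u) ≤ 2·dist u v`. -/
theorem pivot_increment_le {V : Type*} [MetricSpace V]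
    (A : ℕ → Set V) (p : ℕ → V → V)
    (hA : ∀ j, A (j + 1) ⊆ A j)
    (hmem : ∀ j v, p j v ∈ A j)
    (hmin : ∀ j v, ∀ a ∈ A j, dist v (p j v) ≤ dist v a)
    (i : ℕ) (u v : V)
    (h1 : p i u ∉ bunch A p i v)
    (h2 : p (i + 1) v ∉ bunch A p (i + 1) u) :
    dist u (p (i + 2) u) - dist u (p i u) ≤ 2 * dist u v := by
  have hv : dist v (p (i + 1) v) ≤ dist v (p i u) := by
    by_contra h
    exact h1 ⟨hmem i u, lt_of_not_ge h⟩
  have hu : dist u (p (i + 2) u) ≤ dist u (p (i + 1) v) := by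
    by_contra h
    exact h2 ⟨hmem (i + 1) v, lt_of_not_ge h⟩
  have t1 : dist u (p (i + 1) v) ≤ dist u v + dist v (p (i + 1) v) :=
    dist_triangle _ _ _
  have t2 : dist v (p i u) ≤ dist v u + dist u (p i u) := dist_triangle _ _ _
  rw [dist_comm v u] at t2
  linarith
end

section
/- With the setup of a set hierarchy with pivots and bunches in a metric space (V,d): for vertices u, v and index i, define predicates P(u,v,i) ≡ (d(u, p_i(u)) ≤ i·d(u,v)) and Q(u,v,i) ≡ (p_i(u) ∈ B_i(v) or p_{i+1}(v) ∈ B_{i+1}(u)). If P(u,v,i) holds and Q(u,v,i) fails, then P(u,v,i+2) holds. -/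
/-- **If `P(u,v,i)` holds and `Q(u,v,i)` fails then `P(u,v,i+2)` holds.**
Here `P(u,v,i)` means `dist u (p i u) ≤ i·dist u v` and `Q(u,v,i)` means
`p i u ∈ B_i(v)` or `p (i+1) v ∈ B_{i+1}(u)`, in a set hierarchy with pivots
and bunches in a metric space. -/
theorem P_step_of_not_Q {V : Type*} [MetricSpace V]
    (A : ℕ → Set V) (p : ℕ → V → V)
    (hA : ∀ j, A (j + 1) ⊆ A j)
    (hmem : ∀ j v, p j v ∈ A j)
    (hmin : ∀ j v, ∀ a ∈ A j, dist v (p j v) ≤ dist v a)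
    (i : ℕ) (u v : V)
    (hP : dist u (p i u) ≤ (i : ℝ) * dist u v)
    (hQ : ¬(p i u ∈ bunch A p i v ∨ p (i + 1) v ∈ bunch A p (i + 1) u)) :
    dist u (p (i + 2) u) ≤ ((i : ℝ) + 2) * dist u v := by
  push_neg at hQ
  obtain ⟨h1, h2⟩ := hQ
  have hb1 : dist v (p (i + 1) v) ≤ dist v (p i u) := by
    by_contra h
    exact h1 ⟨hmem i u, lt_of_not_ge h⟩
  have hb2 : dist u (p (i + 2) u) ≤ dist u (p (i + 1) v) := by
    by_contra h
    exact h2 ⟨hmem (i + 1) v, lt_of_not_ge h⟩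
  have t1 : dist u (p (i + 1) v) ≤ dist u v + dist v (p (i + 1) v) :=
    dist_triangle _ _ _
  have t2 : dist v (p i u) ≤ dist v u + dist u (p i u) := dist_triangle _ _ _
  have huv : dist v u = dist u v := dist_comm v u
  nlinarith [hP]
end

section
/- With the set-hierarchy setup and predicates P, Q as above: let u, v ∈ V and let i_1 ≤ i_2 be even indices with P(u,v,i_1) true. If Q(u,v,i) fails for all even i ∈ [i_1, i_2], then P(u,v, i_2 + 2) holds. Consequently, either there exists an even index i ∈ [i_1, i_2] with both P(u,v,i) and Q(u,v,i) true, or P(u,v, i_2+2) holds. -/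
lemma step_lemma {V : Type*} [MetricSpace V]
    (A : ℕ → Set V) (p : ℕ → V → V)
    (hmem : ∀ j v, p j v ∈ A j)
    (hmin : ∀ j v, ∀ a ∈ A j, dist v (p j v) ≤ dist v a)
    (u v : V) (i : ℕ)
    (hQ : ¬(p i u ∈ bunch A p i v ∨ p (i + 1) v ∈ bunch A p (i + 1) u)) :
    dist u (p (i + 2) u) ≤ dist u (p i u) + 2 * dist u v := by
  push_neg at hQ
  obtain ⟨h1, h2⟩ := hQ
  simp only [bunch, Set.mem_setOf_eq, not_and, not_lt] at h1 h2
  have hb1 : dist v (p (i + 1) v) ≤ dist v (p i u) := h1 (hmem i u)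
  have hb2 : dist u (p (i + 2) u) ≤ dist u (p (i + 1) v) := h2 (hmem (i + 1) v)
  calc dist u (p (i + 2) u) ≤ dist u (p (i + 1) v) := hb2
    _ ≤ dist u v + dist v (p (i + 1) v) := dist_triangle _ _ _
    _ ≤ dist u v + dist v (p i u) := by linarith
    _ ≤ dist u v + (dist v u + dist u (p i u)) := by linarith [dist_triangle v u (p i u)]
    _ = dist u (p i u) + 2 * dist u v := by rw [dist_comm v u]; ring

lemma chain_lemma {V : Type*} [MetricSpace V]
    (A : ℕ → Set V) (p : ℕ → V → V)
    (hmem : ∀ j v, p j v ∈ A j)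
    (hmin : ∀ j v, ∀ a ∈ A j, dist v (p j v) ≤ dist v a)
    (u v : V) (i₁ : ℕ) (he1 : Even i₁)
    (hP1 : dist u (p i₁ u) ≤ (i₁ : ℝ) * dist u v) :
    ∀ n : ℕ, (∀ i, i₁ ≤ i → i < i₁ + 2 * n → Even i →
        ¬(p i u ∈ bunch A p i v ∨ p (i + 1) v ∈ bunch A p (i + 1) u)) →
      dist u (p (i₁ + 2 * n) u) ≤ ((i₁ : ℝ) + 2 * n) * dist u v := by
  intro n
  induction n with
  | zero => intro _; simpa using hP1
  | succ m ih =>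
    intro hQ
    have hP : dist u (p (i₁ + 2 * m) u) ≤ ((i₁ : ℝ) + 2 * m) * dist u v := by
      apply ih
      intro i hi1 hi2 hie
      exact hQ i hi1 (by omega) hie
    have hQm := hQ (i₁ + 2 * m) (by omega) (by omega) (by
      rcases he1 with ⟨k, hk⟩; exact ⟨k + m, by omega⟩)
    have := step_lemma A p hmem hmin u v (i₁ + 2 * m) hQm
    have heq : i₁ + 2 * (m + 1) = (i₁ + 2 * m) + 2 := by omega
    rw [heq]
    push_cast
    have h0 : (0:ℝ) ≤ dist u v := dist_nonneg
    push_cast at hP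
    nlinarith [this]

/-- **Binary-search invariant for the partial Thorup–Zwick oracle.**
With `P(u,v,i) ≡ dist u (p i u) ≤ i·dist u v` and
`Q(u,v,i) ≡ p i u ∈ B_i(v) ∨ p (i+1) v ∈ B_{i+1}(u)`: if `i₁ ≤ i₂` are even
and `P(u,v,i₁)` holds, then (a) if `Q(u,v,i)` fails for all even
`i ∈ [i₁,i₂]` then `P(u,v,i₂+2)` holds; and (b) either some even
`i ∈ [i₁,i₂]` has both `P(u,v,i)` and `Q(u,v,i)`, or `P(u,v,i₂+2)` holds. -/
theorem desired_index_exists {V : Type*} [MetricSpace V]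
    (A : ℕ → Set V) (p : ℕ → V → V)
    (hA : ∀ j, A (j + 1) ⊆ A j)
    (hmem : ∀ j v, p j v ∈ A j)
    (hmin : ∀ j v, ∀ a ∈ A j, dist v (p j v) ≤ dist v a)
    (u v : V) (i₁ i₂ : ℕ) (h12 : i₁ ≤ i₂) (he1 : Even i₁) (he2 : Even i₂)
    (hP1 : dist u (p i₁ u) ≤ (i₁ : ℝ) * dist u v) :
    ((∀ i, i₁ ≤ i → i ≤ i₂ → Even i →
        ¬(p i u ∈ bunch A p i v ∨ p (i + 1) v ∈ bunch A p (i + 1) u)) →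
      dist u (p (i₂ + 2) u) ≤ ((i₂ : ℝ) + 2) * dist u v)
    ∧ ((∃ i, i₁ ≤ i ∧ i ≤ i₂ ∧ Even i ∧
          dist u (p i u) ≤ (i : ℝ) * dist u v ∧
          (p i u ∈ bunch A p i v ∨ p (i + 1) v ∈ bunch A p (i + 1) u))
        ∨ dist u (p (i₂ + 2) u) ≤ ((i₂ : ℝ) + 2) * dist u v) := by
  classical
  obtain ⟨k1, hk1⟩ := he1
  obtain ⟨k2, hk2⟩ := he2
  have hpartA : (∀ i, i₁ ≤ i → i ≤ i₂ → Even i →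
        ¬(p i u ∈ bunch A p i v ∨ p (i + 1) v ∈ bunch A p (i + 1) u)) →
      dist u (p (i₂ + 2) u) ≤ ((i₂ : ℝ) + 2) * dist u v := by
    intro hQ
    have heq : i₂ + 2 = i₁ + 2 * (k2 - k1 + 1) := by omega
    have := chain_lemma A p hmem hmin u v i₁ ⟨k1, hk1⟩ hP1 (k2 - k1 + 1) (by
      intro i hi1 hi2 hie
      apply hQ i hi1 _ hie
      obtain ⟨k, hk⟩ := hie
      omega)
    rw [heq]
    convert this using 2
    push_cast
    have : (i₂ : ℝ) = i₁ + 2 * ((k2 : ℝ) - k1) := by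
      have : (k1 : ℝ) ≤ k2 := by exact_mod_cast (by omega : k1 ≤ k2)
      push_cast [hk1, hk2]; ring
    rw [this]
    have hcast : ((k2 - k1 : ℕ) : ℝ) = (k2 : ℝ) - k1 := by
      exact_mod_cast Nat.cast_sub (by omega : k1 ≤ k2)
    push_cast [hcast]
    ring
  refine ⟨hpartA, ?_⟩
  by_cases hall : ∀ i, i₁ ≤ i → i ≤ i₂ → Even i →
      ¬(p i u ∈ bunch A p i v ∨ p (i + 1) v ∈ bunch A p (i + 1) u)
  · exact Or.inr (hpartA hall)
  · push_neg at hall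
    left
    have hex : ∃ i, i₁ ≤ i ∧ i ≤ i₂ ∧ Even i ∧
        (p i u ∈ bunch A p i v ∨ p (i + 1) v ∈ bunch A p (i + 1) u) := hall
    obtain ⟨hi1, hi2, hie, hiQ⟩ := Nat.find_spec hex
    refine ⟨Nat.find hex, hi1, hi2, hie, ?_, hiQ⟩
    obtain ⟨ki, hki⟩ := hie
    have heq : Nat.find hex = i₁ + 2 * (ki - k1) := by omega
    have hch := chain_lemma A p hmem hmin u v i₁ ⟨k1, hk1⟩ hP1 (ki - k1) (by
      intro j hj1 hj2 hje hQj
      exact Nat.find_min hex (by omega) ⟨hj1, by omega, hje, hQj⟩)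
    rw [heq]
    push_cast [Nat.cast_sub (show k1 ≤ ki by omega)] at hch ⊢
    linarith
end

section
/- Let (V, d) be the shortest-path metric of an undirected weighted graph, with set hierarchy, pivots, and bunches as usual. Suppose u, v ∈ V, the index i satisfies d(u, p_i(u)) ≤ i·d(u,v), and p_i(u) ∉ B_i(v) but p_{i+1}(v) ∈ B_{i+1}(u). Then d(v, p_{i+1}(v)) + d(p_{i+1}(v), u) ≤ (2i + 3)·d(u, v). -/
/-- **Stretch bound via the pivot of `v`.**
If `dist u (p i u) ≤ i·dist u v`, `p i u ∉ B_i(v)`, and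
`p (i+1) v ∈ B_{i+1}(u)`, then
`dist v (p (i+1) v) + dist (p (i+1) v) u ≤ (2i + 3)·dist u v`. -/
theorem stretch_via_pivot_of_v {V : Type*} [MetricSpace V]
    (A : ℕ → Set V) (p : ℕ → V → V)
    (hA : ∀ j, A (j + 1) ⊆ A j)
    (hmem : ∀ j v, p j v ∈ A j)
    (hmin : ∀ j v, ∀ a ∈ A j, dist v (p j v) ≤ dist v a)
    (i : ℕ) (u v : V)
    (hP : dist u (p i u) ≤ (i : ℝ) * dist u v)
    (h1 : p i u ∉ bunch A p i v)
    (h2 : p (i + 1) v ∈ bunch A p (i + 1) u) :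
    dist v (p (i + 1) v) + dist (p (i + 1) v) u ≤ (2 * (i : ℝ) + 3) * dist u v := by
  have hnot : ¬ dist v (p i u) < dist v (p (i + 1) v) := fun h => h1 ⟨hmem i u, h⟩
  have key : dist v (p (i + 1) v) ≤ ((i : ℝ) + 1) * dist u v := by
    have := not_lt.mp hnot
    have h3 : dist v (p i u) ≤ dist v u + dist u (p i u) := dist_triangle _ _ _
    have h4 : dist v u = dist u v := dist_comm _ _
    nlinarith
  have h5 : dist (p (i + 1) v) u ≤ dist (p (i + 1) v) v + dist v u := dist_triangle _ _ _
  have h6 : dist (p (i + 1) v) v = dist v (p (i + 1) v) := dist_comm _ _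
  have h7 : dist v u = dist u v := dist_comm _ _
  nlinarith
end

section
/- Let G = (V, E) be an undirected weighted graph with metric d, and for each vertex u and index i ∈ [0, h] let p_i(u) ∈ A_i and B_i(u) be pivots and bunches of a set hierarchy. Define the cluster C(u) = {v ∈ V : u ∈ ⋃_{i=0}^{h} B_i(v)}. Then clusters are 'shortest-path closed toward their center': if b ∈ C(a) and x lies on a shortest a–b path (i.e., d(b,a) = d(b,x) + d(x,a)), then x ∈ C(a). -/
/-- The cluster of `a`: all vertices `v` whose bunch at some level `i ≤ h`
contains `a`. -/
def cluster {V : Type*} [MetricSpace V] (A : ℕ → Set V) (p : ℕ → V → V)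
    (h : ℕ) (a : V) : Set V :=
  {v | ∃ i ≤ h, a ∈ bunch A p i v}

/-- **Clusters are shortest-path closed toward their center.**
In the shortest-path metric of an undirected weighted graph, if
`b ∈ C(a)` and `x` lies on a shortest `a–b` path
(`dist b a = dist b x + dist x a`), then `x ∈ C(a)`. -/
theorem cluster_shortestPath_closed {V : Type*} [MetricSpace V]
    (A : ℕ → Set V) (p : ℕ → V → V)
    (hA : ∀ j, A (j + 1) ⊆ A j)
    (hmem : ∀ j v, p j v ∈ A j)
    (hmin : ∀ j v, ∀ a ∈ A j, dist v (p j v) ≤ dist v a)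
    (h : ℕ) (a b x : V)
    (hb : b ∈ cluster A p h a)
    (hx : dist b a = dist b x + dist x a) :
    x ∈ cluster A p h a := by
  obtain ⟨i, hih, haA, hlt⟩ := hb
  refine ⟨i, hih, haA, ?_⟩
  have h1 : dist x a = dist b a - dist b x := by linarith
  have h2 : dist b (p (i + 1) b) ≤ dist b (p (i + 1) x) :=
    hmin (i + 1) b _ (hmem (i + 1) x)
  have h3 : dist b (p (i + 1) x) ≤ dist b x + dist x (p (i + 1) x) :=
    dist_triangle b x (p (i + 1) x)
  linarith
end
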